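/- Suppose c₁ = 1/2 and the function Υ : ℝ → ℝ satisfies (1/2)·sinc(ν/2)·Υ(ν) = b̄₁(ν) and cos(ν/2)·Υ(ν) = b₁(ν) for ν ∈ {0, hω}. Then for every g : ℝ^d → ℝ^d and every integer n ≥ 1, the n-fold composition of the ERKN integrator satisfies Φ_h^n = Φ_{−h/2,L} ∘ Φ_{−h/2,NL} ∘ Φ̂_h^n ∘ Φ_{h/2,NL} ∘ Φ_{h/2,L} = Φ_{h/2,L} ∘ Φ_{h/2,NL} ∘ Φ̂_h^{n−1} ∘ Φ_{h/2,NL} ∘ Φ_{h/2,L}, where Φ̂_h = Φ_{h/2,NL} ∘ Φ_{h,L} ∘ Φ_{h/2,NL}. -/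

import Mathlib

noncomputable section

/-- The (unnormalized) sinc function: `sinc x = sin x / x` for `x ≠ 0`, `sinc 0 = 1`. -/
def rsinc (x : ℝ) : ℝ := if x = 0 then 1 else Real.sin x / x

/-- Real coordinate space `ℝ^d` with the Euclidean norm. -/
abbrev Vec (d : ℕ) : Type := EuclideanSpace ℝ (Fin d)

/-- Block-diagonal scalar operator: multiplies the first `d₁` coordinates by `a`
and the remaining `d₂` coordinates by `b`.  This realizes `f(hΩ)` for
`Ω = diag(0·I_{d₁}, ω·I_{d₂})`, with `a = f 0` and `b = f (hω)`. -/
def bop (d₁ d₂ : ℕ) (a b : ℝ) (v : Vec (d₁ + d₂)) : Vec (d₁ + d₂) :=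
  WithLp.toLp 2 (fun i : Fin (d₁ + d₂) => (if (i : ℕ) < d₁ then a else b) * v i)

/-- One-stage explicit ERKN integrator `Φ_h` for `q'' + Ω²q = g(q)`:
`Q = cos(c₁hΩ)q + c₁h·sinc(c₁hΩ)p`,
`q⁺ = cos(hΩ)q + h·sinc(hΩ)p + h²·b̄₁(hΩ)g(Q)`,
`p⁺ = −hΩ²·sinc(hΩ)q + cos(hΩ)p + h·b₁(hΩ)g(Q)`. -/
def erkn (d₁ d₂ : ℕ) (h ω c₁ : ℝ) (bbar b₁ : ℝ → ℝ)
    (g : Vec (d₁ + d₂) → Vec (d₁ + d₂)) (x : Vec (d₁ + d₂) × Vec (d₁ + d₂)) :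
    Vec (d₁ + d₂) × Vec (d₁ + d₂) :=
  let q := x.1
  let p := x.2
  let Q := bop d₁ d₂ (Real.cos (c₁ * (h * 0))) (Real.cos (c₁ * (h * ω))) q
         + bop d₁ d₂ (c₁ * h * rsinc (c₁ * (h * 0))) (c₁ * h * rsinc (c₁ * (h * ω))) p
  ( bop d₁ d₂ (Real.cos (h * 0)) (Real.cos (h * ω)) q
    + bop d₁ d₂ (h * rsinc (h * 0)) (h * rsinc (h * ω)) p
    + bop d₁ d₂ (h ^ 2 * bbar (h * 0)) (h ^ 2 * bbar (h * ω)) (g Q),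
    bop d₁ d₂ (-(h * 0 ^ 2 * rsinc (h * 0))) (-(h * ω ^ 2 * rsinc (h * ω))) q
    + bop d₁ d₂ (Real.cos (h * 0)) (Real.cos (h * ω)) p
    + bop d₁ d₂ (h * b₁ (h * 0)) (h * b₁ (h * ω)) (g Q) )

/-- Exact time-`t` flow `Φ_{t,L}` of the linear equation `q̇ = p`, `ṗ = −Ω²q`. -/
def phiL (d₁ d₂ : ℕ) (ω t : ℝ) (x : Vec (d₁ + d₂) × Vec (d₁ + d₂)) :
    Vec (d₁ + d₂) × Vec (d₁ + d₂) :=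
  ( bop d₁ d₂ (Real.cos (t * 0)) (Real.cos (t * ω)) x.1
    + bop d₁ d₂ (t * rsinc (t * 0)) (t * rsinc (t * ω)) x.2,
    bop d₁ d₂ (-(t * 0 ^ 2 * rsinc (t * 0))) (-(t * ω ^ 2 * rsinc (t * ω))) x.1
    + bop d₁ d₂ (Real.cos (t * 0)) (Real.cos (t * ω)) x.2 )

/-- Time-`t` flow `Φ_{t,NL}` of the nonlinear equation `q̇ = 0`, `ṗ = Υ(hΩ)g(q)`. -/
def phiNL (d₁ d₂ : ℕ) (h ω : ℝ) (Υ : ℝ → ℝ) (g : Vec (d₁ + d₂) → Vec (d₁ + d₂))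
    (t : ℝ) (x : Vec (d₁ + d₂) × Vec (d₁ + d₂)) :
    Vec (d₁ + d₂) × Vec (d₁ + d₂) :=
  (x.1, x.2 + bop d₁ d₂ (t * Υ (h * 0)) (t * Υ (h * ω)) (g x.1))

/-! With `c₁ = 1/2` and the coupling conditions on `Υ`, one ERKN step is the Strang splitting
`Φ_{h/2,L} ∘ Φ_{h,NL} ∘ Φ_{h/2,L}`: the stage value `Q` is the position after a half linear step,
and the kick `hΥ(hΩ)g(Q)` transported through the second half step yields exactly the
coefficients `h²b̄₁(hΩ)` and `hb₁(hΩ)`. Both flows are one-parameter groups (for the linear flow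
this is the addition theorem for `cos` and `t·sinc(tω)`, valid also at frequency `0`), so
`Ψ = Φ_{h/2,NL} ∘ Φ_{h/2,L}` conjugates `Φ_h` to `Φ̂_h` and has left inverse
`Φ_{−h/2,L} ∘ Φ_{−h/2,NL}`; iterating the conjugacy gives both identities. -/

lemma mul_rsinc (x : ℝ) : x * rsinc x = Real.sin x := by
  rcases eq_or_ne x 0 with rfl | hx
  · simp
  · rw [rsinc, if_neg hx, mul_div_cancel₀ _ hx]

lemma mul_rsinc_add_mul (w s t : ℝ) :
    (s + t) * rsinc ((s + t) * w)
      = s * rsinc (s * w) * Real.cos (t * w) + Real.cos (s * w) * (t * rsinc (t * w)) := by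
  rcases eq_or_ne w 0 with rfl | hw
  · simp [rsinc]
  · refine mul_left_cancel₀ hw ?_
    have hs := mul_rsinc (s * w)
    have ht := mul_rsinc (t * w)
    have hst := mul_rsinc ((s + t) * w)
    have hadd := Real.sin_add (s * w) (t * w)
    rw [← add_mul] at hadd
    linear_combination hst + hadd - Real.cos (t * w) * hs - Real.cos (s * w) * ht

lemma cos_add_mul (w s t : ℝ) :
    Real.cos ((s + t) * w)
      = Real.cos (s * w) * Real.cos (t * w)
          - w ^ 2 * (s * rsinc (s * w)) * (t * rsinc (t * w)) := by
  rw [add_mul, Real.cos_add, ← mul_rsinc (s * w), ← mul_rsinc (t * w)]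
  ring

lemma harmonic_flow_add_fst (w s t q p : ℝ) :
    Real.cos (s * w) * (Real.cos (t * w) * q + t * rsinc (t * w) * p)
        + s * rsinc (s * w) * (-(t * w ^ 2 * rsinc (t * w)) * q + Real.cos (t * w) * p)
      = Real.cos ((s + t) * w) * q + (s + t) * rsinc ((s + t) * w) * p := by
  linear_combination -q * cos_add_mul w s t - p * mul_rsinc_add_mul w s t

lemma harmonic_flow_add_snd (w s t q p : ℝ) :
    -(s * w ^ 2 * rsinc (s * w)) * (Real.cos (t * w) * q + t * rsinc (t * w) * p)
        + Real.cos (s * w) * (-(t * w ^ 2 * rsinc (t * w)) * q + Real.cos (t * w) * p)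
      = -((s + t) * w ^ 2 * rsinc ((s + t) * w)) * q + Real.cos ((s + t) * w) * p := by
  linear_combination q * w ^ 2 * mul_rsinc_add_mul w s t - p * cos_add_mul w s t

section BlockOperators

variable {d₁ d₂ : ℕ}

lemma bop_apply (a b : ℝ) (v : Vec (d₁ + d₂)) (i : Fin (d₁ + d₂)) :
    bop d₁ d₂ a b v i = (if (i : ℕ) < d₁ then a else b) * v i := rfl

lemma bop_add (a b : ℝ) (v w : Vec (d₁ + d₂)) :
    bop d₁ d₂ a b (v + w) = bop d₁ d₂ a b v + bop d₁ d₂ a b w := by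
  ext i; simp only [bop_apply, PiLp.add_apply, mul_add]

lemma add_bop (a b a' b' : ℝ) (v : Vec (d₁ + d₂)) :
    bop d₁ d₂ (a + a') (b + b') v = bop d₁ d₂ a b v + bop d₁ d₂ a' b' v := by
  ext i; simp only [bop_apply, PiLp.add_apply]; split_ifs <;> ring

lemma bop_bop (a b a' b' : ℝ) (v : Vec (d₁ + d₂)) :
    bop d₁ d₂ a b (bop d₁ d₂ a' b' v) = bop d₁ d₂ (a * a') (b * b') v := by
  ext i; simp only [bop_apply]; split_ifs <;> ring

@[simp] lemma bop_zero_zero (v : Vec (d₁ + d₂)) : bop d₁ d₂ 0 0 v = 0 := by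
  ext i; simp [bop_apply]

@[simp] lemma bop_one_one (v : Vec (d₁ + d₂)) : bop d₁ d₂ 1 1 v = v := by
  ext i; simp [bop_apply]

end BlockOperators

section Flows

variable {d₁ d₂ : ℕ}

lemma phiL_add (ω s t : ℝ) (x : Vec (d₁ + d₂) × Vec (d₁ + d₂)) :
    phiL d₁ d₂ ω s (phiL d₁ d₂ ω t x) = phiL d₁ d₂ ω (s + t) x := by
  -- the two blocks are the scalar flows of frequency `0` and `ω`
  refine Prod.ext ?_ ?_ <;> ext i <;> simp only [phiL, bop_apply, PiLp.add_apply] <;> split_ifs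
  exacts [harmonic_flow_add_fst .., harmonic_flow_add_fst .., harmonic_flow_add_snd ..,
    harmonic_flow_add_snd ..]

@[simp] lemma phiL_zero (ω : ℝ) (x : Vec (d₁ + d₂) × Vec (d₁ + d₂)) : phiL d₁ d₂ ω 0 x = x := by
  simp [phiL, rsinc]

lemma phiNL_add (h ω : ℝ) (Υ : ℝ → ℝ) (g : Vec (d₁ + d₂) → Vec (d₁ + d₂)) (s t : ℝ)
    (x : Vec (d₁ + d₂) × Vec (d₁ + d₂)) :
    phiNL d₁ d₂ h ω Υ g s (phiNL d₁ d₂ h ω Υ g t x) = phiNL d₁ d₂ h ω Υ g (s + t) x := by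
  simp only [phiNL, add_mul, add_bop]
  congr 1
  abel

@[simp] lemma phiNL_zero (h ω : ℝ) (Υ : ℝ → ℝ) (g : Vec (d₁ + d₂) → Vec (d₁ + d₂))
    (x : Vec (d₁ + d₂) × Vec (d₁ + d₂)) : phiNL d₁ d₂ h ω Υ g 0 x = x := by
  simp [phiNL]

lemma phiL_mk_add_snd (ω t : ℝ) (q p v : Vec (d₁ + d₂)) :
    phiL d₁ d₂ ω t (q, p + v) = phiL d₁ d₂ ω t (q, p)
      + (bop d₁ d₂ (t * rsinc (t * 0)) (t * rsinc (t * ω)) v,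
         bop d₁ d₂ (Real.cos (t * 0)) (Real.cos (t * ω)) v) := by
  simp only [phiL, bop_add, Prod.mk_add_mk, add_assoc]

lemma erkn_eq_phiL_add (h ω c₁ : ℝ) (bbar b₁ : ℝ → ℝ) (g : Vec (d₁ + d₂) → Vec (d₁ + d₂))
    (x : Vec (d₁ + d₂) × Vec (d₁ + d₂)) :
    erkn d₁ d₂ h ω c₁ bbar b₁ g x = phiL d₁ d₂ ω h x
      + (bop d₁ d₂ (h ^ 2 * bbar (h * 0)) (h ^ 2 * bbar (h * ω)) (g (phiL d₁ d₂ ω (c₁ * h) x).1),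
         bop d₁ d₂ (h * b₁ (h * 0)) (h * b₁ (h * ω)) (g (phiL d₁ d₂ ω (c₁ * h) x).1)) := by
  simp only [erkn, phiL, mul_assoc, Prod.mk_add_mk]

end Flows

theorem erkn_half_eq_strang {d₁ d₂ : ℕ} (h ω : ℝ) (bbar b₁ Υ : ℝ → ℝ)
    (hbbar : ∀ ν ∈ ({0, h * ω} : Set ℝ), (1/2) * rsinc (ν / 2) * Υ ν = bbar ν)
    (hb₁ : ∀ ν ∈ ({0, h * ω} : Set ℝ), Real.cos (ν / 2) * Υ ν = b₁ ν)
    (g : Vec (d₁ + d₂) → Vec (d₁ + d₂)) (x : Vec (d₁ + d₂) × Vec (d₁ + d₂)) :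
    erkn d₁ d₂ h ω (1/2) bbar b₁ g x
      = phiL d₁ d₂ ω (h / 2) (phiNL d₁ d₂ h ω Υ g h (phiL d₁ d₂ ω (h / 2) x)) := by
  rw [erkn_eq_phiL_add, phiNL, phiL_mk_add_snd, phiL_add, add_halves, one_div_mul_eq_div,
    bop_bop, bop_bop]
  have coeff (w : ℝ) (hw : h * w ∈ ({0, h * ω} : Set ℝ)) :
      h ^ 2 * bbar (h * w) = h / 2 * rsinc (h / 2 * w) * (h * Υ (h * w)) ∧
        h * b₁ (h * w) = Real.cos (h / 2 * w) * (h * Υ (h * w)) := by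
    rw [← hbbar _ hw, ← hb₁ _ hw, mul_div_right_comm]
    constructor <;> ring
  congr 3
  exacts [(coeff 0 (by simp)).1, (coeff ω (by simp)).1, (coeff 0 (by simp)).2,
    (coeff ω (by simp)).2]

theorem erkn_iterate_conjugate_general (d₁ d₂ : ℕ) (h ω : ℝ)
    (bbar b₁ Υ : ℝ → ℝ)
    (hΥ₁ : ∀ ν ∈ ({0, h * ω} : Set ℝ), (1/2) * rsinc (ν / 2) * Υ ν = bbar ν)
    (hΥ₂ : ∀ ν ∈ ({0, h * ω} : Set ℝ), Real.cos (ν / 2) * Υ ν = b₁ ν)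
    (g : Vec (d₁ + d₂) → Vec (d₁ + d₂)) (n : ℕ) (hn : 1 ≤ n) :
    let Φhat : Vec (d₁ + d₂) × Vec (d₁ + d₂) → Vec (d₁ + d₂) × Vec (d₁ + d₂) :=
      fun y => phiNL d₁ d₂ h ω Υ g (h/2) (phiL d₁ d₂ ω h (phiNL d₁ d₂ h ω Υ g (h/2) y))
    ∀ x : Vec (d₁ + d₂) × Vec (d₁ + d₂),
      (erkn d₁ d₂ h ω (1/2) bbar b₁ g)^[n] x
        = phiL d₁ d₂ ω (-(h/2)) (phiNL d₁ d₂ h ω Υ g (-(h/2))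
            (Φhat^[n] (phiNL d₁ d₂ h ω Υ g (h/2) (phiL d₁ d₂ ω (h/2) x)))) ∧
      (erkn d₁ d₂ h ω (1/2) bbar b₁ g)^[n] x
        = phiL d₁ d₂ ω (h/2) (phiNL d₁ d₂ h ω Υ g (h/2)
            (Φhat^[n - 1] (phiNL d₁ d₂ h ω Υ g (h/2) (phiL d₁ d₂ ω (h/2) x)))) := by
  intro Φhat x
  set Ψ := fun y => phiNL d₁ d₂ h ω Υ g (h/2) (phiL d₁ d₂ ω (h/2) y)
  have hΨ_inv : Function.LeftInverse
      (fun y => phiL d₁ d₂ ω (-(h/2)) (phiNL d₁ d₂ h ω Υ g (-(h/2)) y)) Ψ :=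
    fun y => by simp only [Ψ, phiNL_add, phiL_add, neg_add_cancel, phiNL_zero, phiL_zero]
  have hΨ_semiconj : Function.Semiconj Ψ (erkn d₁ d₂ h ω (1/2) bbar b₁ g) Φhat := fun y => by
    simp only [Ψ, Φhat, erkn_half_eq_strang h ω bbar b₁ Υ hΥ₁ hΥ₂, phiL_add, phiNL_add, add_halves]
  have hfirst : (erkn d₁ d₂ h ω (1/2) bbar b₁ g)^[n] x
      = phiL d₁ d₂ ω (-(h/2)) (phiNL d₁ d₂ h ω Υ g (-(h/2)) (Φhat^[n] (Ψ x))) := by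
    rw [← hΨ_semiconj.iterate_right n x]
    exact (hΨ_inv _).symm
  refine ⟨hfirst, ?_⟩
  obtain ⟨m, rfl⟩ := Nat.exists_eq_add_of_le' hn
  rw [hfirst, Nat.add_sub_cancel, Function.iterate_succ_apply']
  simp only [Φhat, Ψ, phiNL_add, phiL_add, neg_add_cancel, phiNL_zero, neg_add_eq_sub, sub_half]

/-- `n`-fold conjugacy: for `n ≥ 1`,
`Φ_h^n = Φ_{−h/2,L} ∘ Φ_{−h/2,NL} ∘ Φ̂_h^n ∘ Φ_{h/2,NL} ∘ Φ_{h/2,L}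
       = Φ_{h/2,L} ∘ Φ_{h/2,NL} ∘ Φ̂_h^{n−1} ∘ Φ_{h/2,NL} ∘ Φ_{h/2,L}`. -/
theorem erkn_iterate_conjugate (d₁ d₂ : ℕ) (h ω : ℝ) (hh : 0 < h) (hω : 0 < ω)
    (bbar b₁ Υ : ℝ → ℝ)
    (hΥ₁ : ∀ ν ∈ ({0, h * ω} : Set ℝ), (1/2) * rsinc (ν / 2) * Υ ν = bbar ν)
    (hΥ₂ : ∀ ν ∈ ({0, h * ω} : Set ℝ), Real.cos (ν / 2) * Υ ν = b₁ ν)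
    (g : Vec (d₁ + d₂) → Vec (d₁ + d₂)) (n : ℕ) (hn : 1 ≤ n) :
    let Φhat : Vec (d₁ + d₂) × Vec (d₁ + d₂) → Vec (d₁ + d₂) × Vec (d₁ + d₂) :=
      fun y => phiNL d₁ d₂ h ω Υ g (h/2) (phiL d₁ d₂ ω h (phiNL d₁ d₂ h ω Υ g (h/2) y))
    ∀ x : Vec (d₁ + d₂) × Vec (d₁ + d₂),
      (erkn d₁ d₂ h ω (1/2) bbar b₁ g)^[n] x
        = phiL d₁ d₂ ω (-(h/2)) (phiNL d₁ d₂ h ω Υ g (-(h/2))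
            (Φhat^[n] (phiNL d₁ d₂ h ω Υ g (h/2) (phiL d₁ d₂ ω (h/2) x)))) ∧
      (erkn d₁ d₂ h ω (1/2) bbar b₁ g)^[n] x
        = phiL d₁ d₂ ω (h/2) (phiNL d₁ d₂ h ω Υ g (h/2)
            (Φhat^[n - 1] (phiNL d₁ d₂ h ω Υ g (h/2) (phiL d₁ d₂ ω (h/2) x)))) :=
  erkn_iterate_conjugate_general d₁ d₂ h ω bbar b₁ Υ hΥ₁ hΥ₂ g n hn
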